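/- Let n ≥ 2 be an integer and 0 < μ < 1/n. Then the atomless measure F* on [0,1] with cumulative distribution function F*(x) = (x/(nμ))^{1/(n-1)} for x ∈ [0, nμ] (and F*(x) = 1 for x ≥ nμ) is the unique symmetric equilibrium of the frictionless game: u_n(G,F*) ≤ 1/n for every G ∈ M(μ), and any F ∈ M(μ) with u_n(G,F) ≤ 1/n for every G ∈ M(μ) equals F*. -/

import Mathlib

open MeasureTheory

/-- The fair-tie winning probability of one draw from `G` against `n-1` i.i.d. draws from
`F`, with exact ties broken uniformly at random. -/
noncomputable def winProb (n : ℕ) (G F : Measure ℝ) : ℝ :=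
  ∫ x, (∑ i ∈ Finset.range n,
      ((n - 1).choose i : ℝ) * ((F {x}).toReal) ^ i * ((F (Set.Ico 0 x)).toReal) ^ (n - 1 - i)
        / ((i : ℝ) + 1)) ∂G

/-- `F ∈ M(μ)`: a Borel probability measure on `[0,1]` with mean `μ`. -/
def MemM (μ : ℝ) (F : Measure ℝ) : Prop :=
  IsProbabilityMeasure F ∧ F (Set.Icc (0:ℝ) 1)ᶜ = 0 ∧ (∫ x, x ∂F) = μ


/-!
Write `w_F x` for the probability that a bid `x` beats `n - 1` independent draws from `F`,
so that `u_n(G, F) = ∫ w_F dG`. Always `F[0, x) ^ (n - 1) ≤ w_F x ≤ F(-∞, x] ^ (n - 1)`.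

Since `F*(-∞, x] ^ (n - 1) ≤ x / (n μ)` on `[0, 1]`, a bid distribution `G` of mean `μ` wins
against `F*` with probability at most `μ / (n μ) = 1 / n`.

Conversely, let `F` be an equilibrium. Testing it against two-point distributions of mean `μ`
shows that `w_F` lies below a line `ℓ` through `(μ, 1 / n)`, whose slope `β` lies in
`[0, 1 / (n μ)]` because `w_F 0 ≥ 0` and `w_F 1 ≥ 1 / n`. Hence `F[0, t) ≤ min 1 (ℓ t)₊ ^ r` on
`[0, 1]`, where `r = 1 / (n - 1)`. The left side integrates to `1 - μ` over `[0, 1]`. By concavity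
of `u ↦ u ^ r`, the right side integrates to at most `n μ - μ` over `[0, n μ]`, so it must equal
`1` on `[n μ, 1]`. This forces `β = 1 / (n μ)`, which makes the bound the cdf of `F*`; the two
integrals then agree, so the cdf of `F` equals that of `F*` almost everywhere, hence everywhere.
-/

namespace FrictionlessGame

open Set

noncomputable def tieWeight (n : ℕ) (p q : ℝ) : ℝ :=
  ∑ i ∈ Finset.range n, ((n - 1).choose i : ℝ) * p ^ i * q ^ (n - 1 - i) / ((i : ℝ) + 1)

section TieWeight

variable {n : ℕ} {p q : ℝ}

lemma tieWeight_nonneg (hp : 0 ≤ p) (hq : 0 ≤ q) : 0 ≤ tieWeight n p q :=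
  Finset.sum_nonneg fun _ _ => by positivity

lemma sum_choose_mul_pow_eq_add_pow (hn : 1 ≤ n) (p q : ℝ) :
    ∑ i ∈ Finset.range n, ((n - 1).choose i : ℝ) * p ^ i * q ^ (n - 1 - i) =
      (p + q) ^ (n - 1) := by
  obtain ⟨k, rfl⟩ := Nat.exists_eq_add_of_le' hn
  simp only [Nat.add_sub_cancel, add_pow]
  exact Finset.sum_congr rfl fun _ _ => by ring

lemma tieWeight_le_pow (hn : 1 ≤ n) (hp : 0 ≤ p) (hq : 0 ≤ q) :
    tieWeight n p q ≤ (p + q) ^ (n - 1) := by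
  rw [← sum_choose_mul_pow_eq_add_pow hn]
  exact Finset.sum_le_sum fun i _ =>
    div_le_self (by positivity) (le_add_of_nonneg_left i.cast_nonneg)

lemma pow_div_le_tieWeight (hn : 1 ≤ n) (hp : 0 ≤ p) (hq : 0 ≤ q) :
    (p + q) ^ (n - 1) / n ≤ tieWeight n p q := by
  rw [← sum_choose_mul_pow_eq_add_pow hn, Finset.sum_div]
  refine Finset.sum_le_sum fun i hi => ?_
  have hin : (i : ℝ) + 1 ≤ n := by exact_mod_cast Finset.mem_range.mp hi
  gcongr

lemma pow_le_tieWeight (hn : 1 ≤ n) (hp : 0 ≤ p) (hq : 0 ≤ q) :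
    q ^ (n - 1) ≤ tieWeight n p q := by
  unfold tieWeight
  refine le_of_eq_of_le ?_
    (Finset.single_le_sum (fun _ _ => by positivity) (Finset.mem_range.mpr hn))
  simp

end TieWeight

noncomputable def winDensity (n : ℕ) (F : Measure ℝ) (x : ℝ) : ℝ :=
  tieWeight n (F {x}).toReal (F (Ico 0 x)).toReal

lemma winProb_eq_integral_winDensity (n : ℕ) (G F : Measure ℝ) :
    winProb n G F = ∫ x, winDensity n F x ∂G := rfl

section WinDensity

variable {n : ℕ} {F : Measure ℝ}

lemma winDensity_nonneg (x : ℝ) : 0 ≤ winDensity n F x :=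
  tieWeight_nonneg ENNReal.toReal_nonneg ENNReal.toReal_nonneg

lemma measure_singleton_add_Ico (x : ℝ) : F {x} + F (Ico 0 x) = F (insert x (Ico 0 x)) := by
  rw [← singleton_union, measure_union (by simp) measurableSet_Ico]

lemma winDensity_le_pow [IsFiniteMeasure F] (hn : 1 ≤ n) (x : ℝ) :
    winDensity n F x ≤ (F (Iic x)).toReal ^ (n - 1) := by
  refine (tieWeight_le_pow hn ENNReal.toReal_nonneg ENNReal.toReal_nonneg).trans ?_
  rw [← ENNReal.toReal_add (measure_ne_top _ _) (measure_ne_top _ _), measure_singleton_add_Ico]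
  gcongr
  · exact measure_ne_top _ _
  · exact insert_subset_iff.mpr ⟨mem_Iic.mpr le_rfl, fun _ hy => hy.2.le⟩

lemma pow_le_winDensity (hn : 1 ≤ n) (x : ℝ) :
    (F (Ico 0 x)).toReal ^ (n - 1) ≤ winDensity n F x :=
  pow_le_tieWeight hn ENNReal.toReal_nonneg ENNReal.toReal_nonneg

lemma one_div_le_winDensity_one [IsProbabilityMeasure F] (hF : F (Icc (0:ℝ) 1)ᶜ = 0)
    (hn : 1 ≤ n) : 1 / (n : ℝ) ≤ winDensity n F 1 := by
  have h := pow_div_le_tieWeight (n := n) hn (ENNReal.toReal_nonneg (a := F {1}))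
    (ENNReal.toReal_nonneg (a := F (Ico 0 1)))
  rwa [← ENNReal.toReal_add (measure_ne_top _ _) (measure_ne_top _ _), measure_singleton_add_Ico,
    Ico_insert_right zero_le_one, (prob_compl_eq_zero_iff measurableSet_Icc).mp hF,
    ENNReal.toReal_one, one_pow] at h

end WinDensity

noncomputable def twoPoint (θ a b : ℝ) : Measure ℝ :=
  ENNReal.ofReal θ • Measure.dirac a + ENNReal.ofReal (1 - θ) • Measure.dirac b

section TwoPoint

variable {θ : ℝ} (a b : ℝ)

lemma integral_twoPoint (f : ℝ → ℝ) (h0 : 0 ≤ θ) (h1 : θ ≤ 1) :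
    ∫ x, f x ∂twoPoint θ a b = θ * f a + (1 - θ) * f b := by
  have hint : ∀ c, Integrable f (Measure.dirac c) :=
    fun c => (integrable_const _).congr (ae_eq_dirac f).symm
  rw [twoPoint, integral_add_measure ((hint a).smul_measure ENNReal.ofReal_ne_top)
    ((hint b).smul_measure ENNReal.ofReal_ne_top), integral_smul_measure, integral_smul_measure,
    integral_dirac, integral_dirac, ENNReal.toReal_ofReal h0, ENNReal.toReal_ofReal (by linarith),
    smul_eq_mul, smul_eq_mul]

lemma memM_twoPoint {μ : ℝ} (h0 : 0 ≤ θ) (h1 : θ ≤ 1) (ha : a ∈ Icc (0:ℝ) 1)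
    (hb : b ∈ Icc (0:ℝ) 1) (hmean : θ * a + (1 - θ) * b = μ) : MemM μ (twoPoint θ a b) := by
  refine ⟨⟨?_⟩, ?_, by rw [integral_twoPoint a b _ h0 h1, hmean]⟩
  · simp [twoPoint, ← ENNReal.ofReal_add h0 (sub_nonneg.mpr h1)]
  · simp [twoPoint, Measure.dirac_apply' _ measurableSet_Icc.compl, ha, hb]

end TwoPoint

lemma convex_comb_winDensity_le {n : ℕ} {μ v : ℝ} {F : Measure ℝ}
    (hF : ∀ G, MemM μ G → winProb n G F ≤ v) {θ a b : ℝ} (h0 : 0 ≤ θ) (h1 : θ ≤ 1)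
    (ha : a ∈ Icc (0:ℝ) 1) (hb : b ∈ Icc (0:ℝ) 1) (hmean : θ * a + (1 - θ) * b = μ) :
    θ * winDensity n F a + (1 - θ) * winDensity n F b ≤ v := by
  have h := hF _ (memM_twoPoint a b h0 h1 ha hb hmean)
  rwa [winProb_eq_integral_winDensity, integral_twoPoint a b _ h0 h1] at h

-- The slope is the supremum of the slopes of the chords from `(m, y)` to the graph right of `m`.
lemma exists_affine_majorant_of_convex_comb_le {f : ℝ → ℝ} {p q m y : ℝ} (hpm : p < m)
    (hmq : m < q)
    (h : ∀ a ∈ Icc p q, ∀ b ∈ Icc p q, ∀ θ : ℝ, 0 ≤ θ → θ ≤ 1 → θ * a + (1 - θ) * b = m →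
      θ * f a + (1 - θ) * f b ≤ y) :
    ∃ β, ∀ x ∈ Icc p q, f x ≤ y + β * (x - m) := by
  have hslope : ∀ a ∈ Ico p m, ∀ b ∈ Ioc m q, (f b - y) / (b - m) ≤ (y - f a) / (m - a) := by
    intro a ha b hb
    have hba : 0 < b - a := by linarith [ha.2, hb.1]
    have hθ := h a ⟨ha.1, by linarith [ha.2]⟩ b ⟨by linarith [hb.1], hb.2⟩ ((b - m) / (b - a))
      (div_nonneg (by linarith [hb.1]) hba.le) ((div_le_one hba).mpr (by linarith [ha.2]))
      (by field_simp; ring)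
    have hchord : (b - m) * f a + (m - a) * f b ≤ (b - a) * y := by
      have := mul_le_mul_of_nonneg_left hθ hba.le
      field_simp at this
      linarith
    rw [div_le_div_iff₀ (by linarith [hb.1]) (by linarith [ha.2])]
    linarith
  set S := (fun b => (f b - y) / (b - m)) '' Ioc m q
  have hbdd : BddAbove S :=
    ⟨(y - f p) / (m - p), forall_mem_image.mpr fun b hb => hslope p ⟨le_rfl, hpm⟩ b hb⟩
  refine ⟨sSup S, fun x hx => ?_⟩
  rcases lt_trichotomy x m with hxm | rfl | hxm
  · have := csSup_le ((nonempty_Ioc.mpr hmq).image _)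
      (forall_mem_image.mpr fun b hb => hslope x ⟨hx.1, hxm⟩ b hb)
    rw [le_div_iff₀ (by linarith)] at this
    linarith
  · have := h p ⟨le_rfl, hpm.le.trans hmq.le⟩ x hx 0 le_rfl zero_le_one (by ring)
    linarith
  · have := le_csSup hbdd (mem_image_of_mem _ ⟨hxm, hx.2⟩)
    rw [div_le_iff₀ (by linarith)] at this
    linarith

noncomputable def truncRpow (r u : ℝ) : ℝ :=
  min 1 (max 0 u ^ r)

section TruncRpow

variable {r u : ℝ}

lemma truncRpow_le_one : truncRpow r u ≤ 1 := min_le_left _ _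

lemma truncRpow_nonneg : 0 ≤ truncRpow r u :=
  le_min zero_le_one (Real.rpow_nonneg (le_max_left _ _) _)

lemma continuous_truncRpow (hr : 0 ≤ r) : Continuous (truncRpow r) :=
  continuous_const.min ((continuous_const.max continuous_id).rpow_const fun _ => Or.inr hr)

lemma truncRpow_of_nonpos (hr : 0 < r) (hu : u ≤ 0) : truncRpow r u = 0 := by
  rw [truncRpow, max_eq_left hu, Real.zero_rpow hr.ne', min_eq_right zero_le_one]

lemma truncRpow_of_one_le (hr : 0 ≤ r) (hu : 1 ≤ u) : truncRpow r u = 1 := by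
  rw [truncRpow, max_eq_right (by linarith)]
  exact min_eq_left (Real.one_le_rpow hu hr)

lemma truncRpow_of_nonneg_of_le_one (hr : 0 ≤ r) (hu0 : 0 ≤ u) (hu1 : u ≤ 1) :
    truncRpow r u = u ^ r := by
  rw [truncRpow, max_eq_right hu0]
  exact min_eq_right (Real.rpow_le_one hu0 hu1 hr)

lemma truncRpow_le_rpow (hu : 0 ≤ u) : truncRpow r u ≤ u ^ r := by
  rw [truncRpow, max_eq_right hu]
  exact min_le_right _ _

lemma one_le_of_truncRpow_eq_one (hr : 0 < r) (h : truncRpow r u = 1) : 1 ≤ u := by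
  by_contra! hu
  have : max 0 u ^ r < 1 := Real.rpow_lt_one (le_max_left _ _) (max_lt zero_lt_one hu) hr
  exact absurd h ((min_le_right _ _).trans_lt this).ne

lemma truncRpow_pow_le {k : ℕ} (hrk : r * k = 1) (hu : 0 ≤ u) : truncRpow r u ^ k ≤ u := by
  calc truncRpow r u ^ k ≤ (u ^ r) ^ k := by
        gcongr; exacts [truncRpow_nonneg, truncRpow_le_rpow hu]
    _ = u := by rw [← Real.rpow_natCast, ← Real.rpow_mul hu, hrk, Real.rpow_one]

lemma le_truncRpow_of_pow_le {k : ℕ} (hr : 0 < r) (hrk : r * k = 1) {t : ℝ} (ht0 : 0 ≤ t)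
    (ht1 : t ≤ 1) (h : t ^ k ≤ u) : t ≤ truncRpow r u := by
  refine le_min ht1 ?_
  calc t = (t ^ k) ^ r := by
        rw [← Real.rpow_natCast, ← Real.rpow_mul ht0, mul_comm, hrk, Real.rpow_one]
    _ ≤ max 0 u ^ r := by gcongr; exact h.trans (le_max_right _ _)

end TruncRpow

lemma rpow_le_rpow_add_mul_sub {r u v : ℝ} (hr0 : 0 ≤ r) (hr1 : r ≤ 1) (hu : 0 ≤ u)
    (hv : 0 < v) : u ^ r ≤ v ^ r + r * v ^ (r - 1) * (u - v) := by
  have hbernoulli := rpow_one_add_le_one_add_mul_self (s := u / v - 1)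
    (by linarith [div_nonneg hu hv.le]) hr0 hr1
  have hvr : v ^ r = v ^ (r - 1) * v := by rw [← Real.rpow_add_one hv.ne', sub_add_cancel]
  calc u ^ r = v ^ r * (1 + (u / v - 1)) ^ r := by
        rw [add_sub_cancel, ← Real.mul_rpow hv.le (div_nonneg hu hv.le), mul_div_cancel₀ _ hv.ne']
    _ ≤ v ^ r * (1 + r * (u / v - 1)) := by gcongr
    _ = v ^ r + r * v ^ (r - 1) * (u - v) := by rw [hvr]; field_simp

lemma integral_rpow_sub_one_mul_sub {r : ℝ} (hr : 0 < r) :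
    ∫ s in (0:ℝ)..1, s ^ (r - 1) * (r / (r + 1) - s) = 0 := by
  have hcongr : EqOn (fun s : ℝ => s ^ (r - 1) * (r / (r + 1) - s))
      (fun s => r / (r + 1) * s ^ (r - 1) - s ^ r) (uIcc 0 1) := fun s hs => by
    have hs0 : 0 ≤ s := (uIcc_of_le (zero_le_one : (0:ℝ) ≤ 1) ▸ hs).1
    have hsr : s ^ r = s ^ (r - 1) * s := by
      rw [← Real.rpow_add_one' hs0 (by simpa using hr.ne'), sub_add_cancel]
    simp only [hsr]
    ring
  rw [intervalIntegral.integral_congr hcongr, intervalIntegral.integral_sub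
    ((intervalIntegral.intervalIntegrable_rpow' (by linarith)).const_mul _)
    (intervalIntegral.intervalIntegrable_rpow' (by linarith)), intervalIntegral.integral_const_mul,
    integral_rpow (Or.inl (by linarith)), integral_rpow (Or.inl (by linarith))]
  simp [Real.zero_rpow hr.ne', Real.zero_rpow (by linarith : r + 1 ≠ 0)]
  field_simp
  ring

-- Bound the integrand by the tangent line of `u ↦ u ^ r` at `s`: the correction term integrates
-- to zero because `r / (r + 1)` is the mean of the density `r s ^ (r - 1)` on `[0, 1]`.
lemma integral_rpow_affine_le {r γ : ℝ} (hr0 : 0 < r) (hr1 : r ≤ 1) (hγ0 : 0 ≤ γ)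
    (hγ1 : γ ≤ 1) :
    ∫ s in (0:ℝ)..1, (r / (r + 1) + γ * (s - r / (r + 1))) ^ r ≤ 1 / (r + 1) := by
  set ρ := r / (r + 1)
  have hρ0 : 0 ≤ ρ := by positivity
  have hcont : Continuous fun s : ℝ => (ρ + γ * (s - ρ)) ^ r :=
    Continuous.rpow_const (by fun_prop) fun _ => Or.inr hr0.le
  have hint_r := intervalIntegral.intervalIntegrable_rpow' (a := 0) (b := 1) (by linarith : -1 < r)
  have hint_corr : IntervalIntegrable (fun s : ℝ => r * (1 - γ) * (s ^ (r - 1) * (ρ - s)))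
      volume 0 1 :=
    ((intervalIntegral.intervalIntegrable_rpow' (by linarith)).mul_continuousOn
      (by fun_prop)).const_mul _
  calc ∫ s in (0:ℝ)..1, (ρ + γ * (s - ρ)) ^ r
      ≤ ∫ s in (0:ℝ)..1, (s ^ r + r * (1 - γ) * (s ^ (r - 1) * (ρ - s))) := by
        refine intervalIntegral.integral_mono_on_of_le_Ioo zero_le_one
          (hcont.intervalIntegrable _ _) (hint_r.add hint_corr) fun s hs => ?_
        have hu : 0 ≤ ρ + γ * (s - ρ) := by nlinarith [hs.1]
        calc (ρ + γ * (s - ρ)) ^ r ≤ s ^ r + r * s ^ (r - 1) * (ρ + γ * (s - ρ) - s) :=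
              rpow_le_rpow_add_mul_sub hr0.le hr1 hu hs.1
          _ = _ := by ring
    _ = 1 / (r + 1) := by
        rw [intervalIntegral.integral_add hint_r hint_corr, intervalIntegral.integral_const_mul,
          integral_rpow_sub_one_mul_sub hr0, integral_rpow (Or.inl (by linarith))]
        simp [Real.zero_rpow (by linarith : r + 1 ≠ 0)]

lemma integral_truncRpow_line_le {r c μ β : ℝ} (hr0 : 0 < r) (hr1 : r ≤ 1) (hc : 0 < c)
    (hμ : μ = c * (r / (r + 1))) (hβ0 : 0 ≤ β) (hβ1 : β ≤ 1 / c) :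
    ∫ x in (0:ℝ)..c, truncRpow r (μ / c + β * (x - μ)) ≤ c - μ := by
  have hscale := intervalIntegral.integral_comp_mul_left
    (fun x => truncRpow r (μ / c + β * (x - μ))) (a := 0) (b := 1) hc.ne'
  rw [mul_zero, mul_one, smul_eq_mul] at hscale
  have hline : ∀ s, μ / c + β * (c * s - μ) = r / (r + 1) + β * c * (s - r / (r + 1)) := by
    intro s; rw [hμ]; field_simp
  have hγ1 : β * c ≤ 1 := by rwa [le_div_iff₀ hc] at hβ1
  have hle : ∫ s in (0:ℝ)..1, truncRpow r (μ / c + β * (c * s - μ)) ≤ 1 / (r + 1) := by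
    refine le_trans (intervalIntegral.integral_mono_on zero_le_one ?_ ?_ fun s hs => ?_)
      (integral_rpow_affine_le hr0 hr1 (by positivity) hγ1)
    · exact ((continuous_truncRpow hr0.le).comp (by fun_prop)).intervalIntegrable _ _
    · exact (Continuous.rpow_const (by fun_prop) fun _ => Or.inr hr0.le).intervalIntegrable _ _
    · rw [hline]
      refine truncRpow_le_rpow ?_
      have : 0 ≤ r / (r + 1) := by positivity
      nlinarith [hs.1, hs.2, mul_nonneg (by positivity : 0 ≤ β * c) hs.1]
  rw [hscale, ← div_eq_inv_mul, div_le_iff₀ hc] at hle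
  have hcμ : c - μ = 1 / (r + 1) * c := by rw [hμ]; field_simp; ring
  linarith

section Distribution

variable {F : Measure ℝ}

lemma measure_Iio_of_nonpos (hF : F (Icc (0:ℝ) 1)ᶜ = 0) {x : ℝ} (hx : x ≤ 0) :
    F (Iio x) = 0 :=
  measure_mono_null (fun t ht => show t ∉ Icc (0:ℝ) 1 from fun hmem =>
    (hmem.1.trans_lt ((mem_Iio.mp ht).trans_le hx)).false) hF

lemma measure_Iic_of_neg (hF : F (Icc (0:ℝ) 1)ᶜ = 0) {x : ℝ} (hx : x < 0) : F (Iic x) = 0 :=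
  measure_mono_null (fun t ht => show t ∉ Icc (0:ℝ) 1 from fun hmem =>
    (hmem.1.trans_lt ((mem_Iic.mp ht).trans_lt hx)).false) hF

lemma measure_Iio_of_one_lt [IsProbabilityMeasure F] (hF : F (Icc (0:ℝ) 1)ᶜ = 0) {x : ℝ}
    (hx : 1 < x) : F (Iio x) = 1 := by
  refine le_antisymm prob_le_one ?_
  rw [← (prob_compl_eq_zero_iff measurableSet_Icc).mp hF]
  exact measure_mono fun t ht => ht.2.trans_lt hx

lemma measure_Ico_zero_eq_Iio (hF : F (Icc (0:ℝ) 1)ᶜ = 0) (x : ℝ) :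
    F (Ico 0 x) = F (Iio x) := by
  refine le_antisymm (measure_mono Ico_subset_Iio_self) ?_
  calc F (Iio x) ≤ F (Ico 0 x ∪ Iio 0) := measure_mono fun t ht => by
        rcases le_or_gt 0 t with h | h
        exacts [Or.inl ⟨h, ht⟩, Or.inr h]
    _ ≤ F (Ico 0 x) + F (Iio 0) := measure_union_le _ _
    _ = F (Ico 0 x) := by rw [measure_Iio_of_nonpos hF le_rfl, add_zero]

lemma integrable_id_of_measure_compl_Icc [IsFiniteMeasure F] (hF : F (Icc (0:ℝ) 1)ᶜ = 0) :
    Integrable (fun x : ℝ => x) F :=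
  Integrable.of_bound (C := 1) aestronglyMeasurable_id ((ae_iff.mpr hF).mono fun x hx => by
    rw [Real.norm_eq_abs, abs_le]; exact ⟨by linarith [hx.1], hx.2⟩)

lemma intervalIntegrable_measure_Iio [IsFiniteMeasure F] (a b : ℝ) :
    IntervalIntegrable (fun t => (F (Iio t)).toReal) volume a b :=
  Monotone.intervalIntegrable fun _ _ hst =>
    ENNReal.toReal_mono (measure_ne_top _ _) (measure_mono (Iio_subset_Iio hst))

lemma integral_measure_Iio [IsProbabilityMeasure F] (hF : F (Icc (0:ℝ) 1)ᶜ = 0) :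
    ∫ t in (0:ℝ)..1, (F (Iio t)).toReal = 1 - ∫ x, x ∂F := by
  have hmem : ∀ᵐ x ∂F, x ∈ Icc (0:ℝ) 1 := ae_iff.mpr hF
  have hcompl : ∀ t : ℝ, F.real {a | t ≤ a} = 1 - (F (Iio t)).toReal := fun t => by
    show F.real (Ici t) = _
    rw [← compl_Iio, probReal_compl_eq_one_sub measurableSet_Iio]
    rfl
  rw [(integrable_id_of_measure_compl_Icc hF).integral_eq_integral_Ioc_meas_le (M := 1)
    (hmem.mono fun _ hx => hx.1) (hmem.mono fun _ hx => hx.2),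
    ← intervalIntegral.integral_of_le zero_le_one]
  simp_rw [hcompl]
  rw [intervalIntegral.integral_sub intervalIntegrable_const (intervalIntegrable_measure_Iio 0 1),
    intervalIntegral.integral_const]
  simp

lemma measure_Iic_eq_of_ae_eq [IsFiniteMeasure F] {g : ℝ → ℝ} (hg : Continuous g)
    (h : ∀ᵐ t, (F (Iio t)).toReal = g t) (x : ℝ) : (F (Iic x)).toReal = g x := by
  have hclosure : ∀ U : Set ℝ, IsOpen U → x ∈ closure U →
      x ∈ closure (U ∩ {t | (F (Iio t)).toReal = g t}) := fun U hU hx =>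
    closure_minimal ((Measure.dense_of_ae h).open_subset_closure_inter hU) isClosed_closure hx
  refine le_antisymm ?_ ?_
  · refine closure_minimal (fun t ht => ?_) (isClosed_le continuous_const hg)
      (hclosure (Ioi x) isOpen_Ioi (by rw [closure_Ioi]; exact mem_Ici.mpr le_rfl))
    exact (ENNReal.toReal_mono (measure_ne_top _ _)
      (measure_mono (Iic_subset_Iio.mpr ht.1))).trans_eq ht.2
  · refine closure_minimal (fun t ht => ?_) (isClosed_le hg continuous_const)
      (hclosure (Iio x) isOpen_Iio (by rw [closure_Iio]; exact mem_Iic.mpr le_rfl))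
    exact ht.2.symm.trans_le (ENNReal.toReal_mono (measure_ne_top _ _)
      (measure_mono (Iio_subset_Iic_self.trans (Iic_subset_Iic.mpr ht.1.le))))

lemma measure_Iic_eq_truncRpow (hF : F (Icc (0:ℝ) 1)ᶜ = 0) {c r : ℝ} (hc : 0 < c) (hr : 0 < r)
    (hcdf : ∀ x, 0 ≤ x → x ≤ c → (F (Iic x)).toReal = (x / c) ^ r)
    (hcdf' : ∀ x, c ≤ x → (F (Iic x)).toReal = 1) (x : ℝ) :
    (F (Iic x)).toReal = truncRpow r (x / c) := by
  rcases lt_or_ge x 0 with hx0 | hx0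
  · rw [measure_Iic_of_neg hF hx0,
      truncRpow_of_nonpos hr (div_nonpos_of_nonpos_of_nonneg hx0.le hc.le)]
    rfl
  rcases le_or_gt x c with hxc | hxc
  · rw [hcdf x hx0 hxc, truncRpow_of_nonneg_of_le_one hr.le (div_nonneg hx0 hc.le)
      ((div_le_one hc).mpr hxc)]
  · rw [hcdf' x hxc.le, truncRpow_of_one_le hr.le ((one_le_div hc).mpr hxc.le)]

end Distribution

section Uniqueness

variable {F : Measure ℝ} {r c μ : ℝ}

lemma one_sub_integral_le_of_measure_Iio_le [IsProbabilityMeasure F]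
    (hF : F (Icc (0:ℝ) 1)ᶜ = 0) {g : ℝ → ℝ} (hg : IntervalIntegrable g volume 0 1)
    (hle : ∀ t ∈ Icc (0:ℝ) 1, (F (Iio t)).toReal ≤ g t) :
    1 - ∫ x, x ∂F ≤ ∫ t in (0:ℝ)..1, g t :=
  integral_measure_Iio hF ▸
    intervalIntegral.integral_mono_on zero_le_one (intervalIntegrable_measure_Iio 0 1) hg hle

-- The distribution with cdf `ψ` has mean at most `μ`, being dominated by `F`, and at least `μ`,
-- with equality only if `ψ = 1` on `[c, 1]`, by `integral_truncRpow_line_le`; so `ψ c = 1`.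
lemma slope_eq_of_measure_Iio_le [IsProbabilityMeasure F] (hF : F (Icc (0:ℝ) 1)ᶜ = 0)
    (hmean : ∫ x, x ∂F = μ) (hr0 : 0 < r) (hr1 : r ≤ 1) (hc0 : 0 < c) (hc1 : c < 1)
    (hμ : μ = c * (r / (r + 1))) {β : ℝ} (hβ0 : 0 ≤ β) (hβ1 : β ≤ 1 / c)
    (hle : ∀ t ∈ Icc (0:ℝ) 1, (F (Iio t)).toReal ≤ truncRpow r (μ / c + β * (t - μ))) :
    β = 1 / c := by
  set ψ := fun t => truncRpow r (μ / c + β * (t - μ))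
  have hψ : Continuous ψ := (continuous_truncRpow hr0.le).comp (by fun_prop)
  have hlower := one_sub_integral_le_of_measure_Iio_le hF (hψ.intervalIntegrable 0 1) hle
  rw [hmean, ← intervalIntegral.integral_add_adjacent_intervals (hψ.intervalIntegrable 0 c)
    (hψ.intervalIntegrable c 1)] at hlower
  have hupper := integral_truncRpow_line_le hr0 hr1 hc0 hμ hβ0 hβ1
  have hψc : ψ c = 1 := by
    by_contra hne
    have hlt := intervalIntegral.integral_lt_integral_of_continuousOn_of_le_of_exists_lt hc1
      hψ.continuousOn continuousOn_const (fun t _ => truncRpow_le_one)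
      ⟨c, left_mem_Icc.mpr hc1.le, lt_of_le_of_ne truncRpow_le_one hne⟩
    rw [intervalIntegral.integral_const, smul_eq_mul, mul_one] at hlt
    linarith
  have hline := one_le_of_truncRpow_eq_one hr0 hψc
  have hμc : μ < c := by
    rw [hμ]; exact mul_lt_of_lt_one_right hc0 ((div_lt_one (by linarith)).mpr (by linarith))
  refine le_antisymm hβ1 (le_of_mul_le_mul_left ?_ (sub_pos.mpr hμc))
  calc (c - μ) * (1 / c) = 1 - μ / c := by field_simp
    _ ≤ (c - μ) * β := by linarith

lemma measure_Iic_eq_of_measure_Iio_le [IsProbabilityMeasure F] (hF : F (Icc (0:ℝ) 1)ᶜ = 0)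
    (hmean : ∫ x, x ∂F = μ) (hr0 : 0 < r) (hr1 : r ≤ 1) (hc0 : 0 < c) (hc1 : c < 1)
    (hμ : μ = c * (r / (r + 1)))
    (hle : ∀ t ∈ Icc (0:ℝ) 1, (F (Iio t)).toReal ≤ truncRpow r (t / c)) (x : ℝ) :
    (F (Iic x)).toReal = truncRpow r (x / c) := by
  have hψ : Continuous fun t => truncRpow r (t / c) :=
    (continuous_truncRpow hr0.le).comp (by fun_prop)
  have hupper : ∫ t in (0:ℝ)..1, truncRpow r (t / c) ≤ 1 - μ := by
    have h0c := integral_truncRpow_line_le hr0 hr1 hc0 hμ (by positivity) le_rfl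
    simp only [show ∀ t, μ / c + 1 / c * (t - μ) = t / c from fun t => by ring] at h0c
    have hc1' := intervalIntegral.integral_mono_on hc1.le (hψ.intervalIntegrable c 1)
      (intervalIntegrable_const (μ := volume)) fun t _ => (truncRpow_le_one : _ ≤ (1:ℝ))
    rw [intervalIntegral.integral_const, smul_eq_mul, mul_one] at hc1'
    rw [← intervalIntegral.integral_add_adjacent_intervals (hψ.intervalIntegrable 0 c)
      (hψ.intervalIntegrable c 1)]
    linarith
  have hzero : ∫ t in (0:ℝ)..1, (truncRpow r (t / c) - (F (Iio t)).toReal) = 0 := by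
    have hlower := one_sub_integral_le_of_measure_Iio_le hF (hψ.intervalIntegrable 0 1) hle
    rw [intervalIntegral.integral_sub (hψ.intervalIntegrable 0 1)
      (intervalIntegrable_measure_Iio 0 1), integral_measure_Iio hF]
    linarith
  have hae := (intervalIntegral.integral_eq_zero_iff_of_le_of_nonneg_ae zero_le_one
    ((ae_restrict_iff' measurableSet_Ioc).mpr (Filter.Eventually.of_forall fun t ht =>
      sub_nonneg.mpr (hle t (Ioc_subset_Icc_self ht))))
    ((hψ.intervalIntegrable 0 1).sub (intervalIntegrable_measure_Iio 0 1))).mp hzero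
  refine measure_Iic_eq_of_ae_eq hψ ?_ x
  filter_upwards [(ae_restrict_iff' measurableSet_Ioc).mp hae] with t ht
  rcases le_or_gt t 0 with h0 | h0
  · rw [measure_Iio_of_nonpos hF h0,
      truncRpow_of_nonpos hr0 (div_nonpos_of_nonpos_of_nonneg h0 hc0.le)]
    rfl
  rcases le_or_gt t 1 with h1 | h1
  · exact (sub_eq_zero.mp (ht ⟨h0, h1⟩)).symm
  · rw [measure_Iio_of_one_lt hF h1,
      truncRpow_of_one_le hr0.le ((one_le_div hc0).mpr (by linarith))]
    rfl

end Uniqueness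

lemma winProb_le_of_winDensity_le {n : ℕ} {μ a : ℝ} {G F : Measure ℝ} (hG : MemM μ G)
    (h : ∀ x ∈ Icc (0:ℝ) 1, winDensity n F x ≤ a * x) : winProb n G F ≤ a * μ := by
  obtain ⟨hGp, hGs, hGmean⟩ := hG
  rw [winProb_eq_integral_winDensity, ← hGmean, ← integral_const_mul]
  exact integral_mono_of_nonneg (Filter.Eventually.of_forall fun x => winDensity_nonneg x)
    ((integrable_id_of_measure_compl_Icc hGs).const_mul a) ((ae_iff.mpr hGs).mono h)

lemma one_div_sub_one_mul_cast_pred {n : ℕ} (hn : 2 ≤ n) :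
    1 / ((n : ℝ) - 1) * ((n - 1 : ℕ) : ℝ) = 1 := by
  have hnR : (2:ℝ) ≤ n := by exact_mod_cast hn
  rw [Nat.cast_sub (by omega), Nat.cast_one]
  exact one_div_mul_cancel (by linarith : (0:ℝ) < n - 1).ne'

lemma exists_slope_of_forall_winProb_le {n : ℕ} (hn : 2 ≤ n) {μ : ℝ} (hμ : 0 < μ)
    (hμ1 : μ < 1) {F : Measure ℝ} (hF : MemM μ F)
    (heq : ∀ G, MemM μ G → winProb n G F ≤ 1 / (n : ℝ)) :
    ∃ β, 0 ≤ β ∧ β ≤ 1 / (n * μ) ∧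
      ∀ x ∈ Icc (0:ℝ) 1, winDensity n F x ≤ 1 / n + β * (x - μ) := by
  obtain ⟨hFp, hFs, -⟩ := hF
  have hnR : (2:ℝ) ≤ n := by exact_mod_cast hn
  obtain ⟨β, hβ⟩ := exists_affine_majorant_of_convex_comb_le hμ hμ1
    fun a ha b hb θ h0 h1 hm => convex_comb_winDensity_le heq h0 h1 ha hb hm
  refine ⟨β, ?_, ?_, hβ⟩
  · have := (one_div_le_winDensity_one hFs (by omega)).trans
      (hβ 1 (right_mem_Icc.mpr zero_le_one))
    nlinarith
  · have := (winDensity_nonneg 0).trans (hβ 0 (left_mem_Icc.mpr zero_le_one))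
    rw [le_div_iff₀ (by positivity)]
    calc β * (n * μ) = n * (β * μ) := by ring
      _ ≤ n * (1 / n) := by gcongr; linarith
      _ = 1 := mul_one_div_cancel (by linarith)

lemma measure_Iic_eq_of_forall_winProb_le {n : ℕ} (hn : 2 ≤ n) {μ : ℝ} (hμ : 0 < μ)
    (hμn : μ < 1 / (n : ℝ)) {F : Measure ℝ} (hF : MemM μ F)
    (heq : ∀ G, MemM μ G → winProb n G F ≤ 1 / (n : ℝ)) (x : ℝ) :
    (F (Iic x)).toReal = truncRpow (1 / ((n : ℝ) - 1)) (x / (n * μ)) := by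
  have hnR : (2:ℝ) ≤ n := by exact_mod_cast hn
  set r := 1 / ((n : ℝ) - 1) with hr
  set c := (n : ℝ) * μ with hc
  have hr0 : 0 < r := div_pos one_pos (by linarith)
  have hr1 : r ≤ 1 := by rw [hr, div_le_one (by linarith)]; linarith
  have hc0 : 0 < c := by positivity
  have hc1 : c < 1 := by rw [hc, ← lt_div_iff₀' (by positivity)]; exact hμn
  have hμc : μ / c = 1 / n := by rw [hc]; field_simp
  have hμr : μ = c * (r / (r + 1)) := by
    have h1 : (n:ℝ) - 1 ≠ 0 := by linarith
    rw [hr, div_add_one h1, div_div_div_cancel_right₀ h1, add_sub_cancel, ← hμc,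
      mul_div_cancel₀ _ hc0.ne']
  obtain ⟨β, hβ0, hβ1, hβ⟩ := exists_slope_of_forall_winProb_le hn hμ (by nlinarith) hF heq
  obtain ⟨hFp, hFs, hFmean⟩ := hF
  have hle : ∀ t ∈ Icc (0:ℝ) 1, (F (Iio t)).toReal ≤ truncRpow r (μ / c + β * (t - μ)) := by
    intro t ht
    rw [← measure_Ico_zero_eq_Iio hFs, hμc]
    exact le_truncRpow_of_pow_le hr0 (one_div_sub_one_mul_cast_pred hn) ENNReal.toReal_nonneg
      measureReal_le_one ((pow_le_winDensity (by omega) t).trans (hβ t ht))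
  obtain rfl := slope_eq_of_measure_Iio_le hFs hFmean hr0 hr1 hc0 hc1 hμr hβ0 hβ1 hle
  refine measure_Iic_eq_of_measure_Iio_le hFs hFmean hr0 hr1 hc0 hc1 hμr (fun t ht => ?_) x
  simpa only [show μ / c + 1 / c * (t - μ) = t / c by ring] using hle t ht

end FrictionlessGame

open Set FrictionlessGame

theorem stmt_12_general (n : ℕ) (hn : 2 ≤ n) (μ : ℝ) (hμ : 0 < μ) (hμn : μ < 1 / (n : ℝ))
    (Fstar : Measure ℝ) [IsProbabilityMeasure Fstar] (hsupp : Fstar (Set.Icc (0:ℝ) 1)ᶜ = 0)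
    (hcdf : ∀ x : ℝ, 0 ≤ x → x ≤ (n : ℝ) * μ →
      (Fstar (Set.Iic x)).toReal = (x / ((n : ℝ) * μ)) ^ ((1 : ℝ) / ((n : ℝ) - 1)))
    (hcdf2 : ∀ x : ℝ, (n : ℝ) * μ ≤ x → (Fstar (Set.Iic x)).toReal = 1) :
    (∀ G : Measure ℝ, MemM μ G → winProb n G Fstar ≤ 1 / (n : ℝ)) ∧
    (∀ F : Measure ℝ, MemM μ F →
      (∀ G : Measure ℝ, MemM μ G → winProb n G F ≤ 1 / (n : ℝ)) → F = Fstar) := by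
  have hnR : (2:ℝ) ≤ n := by exact_mod_cast hn
  have hc : 0 < (n : ℝ) * μ := by positivity
  have hstar := measure_Iic_eq_truncRpow hsupp hc (div_pos one_pos (by linarith)) hcdf hcdf2
  refine ⟨fun G hG => ?_, fun F hF heq => ?_⟩
  · rw [show 1 / (n : ℝ) = 1 / (n * μ) * μ by field_simp]
    refine winProb_le_of_winDensity_le hG fun x hx => ?_
    calc winDensity n Fstar x ≤ (Fstar (Iic x)).toReal ^ (n - 1) := winDensity_le_pow (by omega) x
      _ ≤ x / (n * μ) := by
        rw [hstar]
        exact truncRpow_pow_le (one_div_sub_one_mul_cast_pred hn) (div_nonneg hx.1 hc.le)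
      _ = 1 / (n * μ) * x := by ring
  · have := hF.1
    refine Measure.ext_of_Iic _ _ fun x => (ENNReal.toReal_eq_toReal_iff' (measure_ne_top _ _)
      (measure_ne_top _ _)).mp ?_
    rw [measure_Iic_eq_of_forall_winProb_le hn hμ hμn hF heq, hstar]

/-- For `n ≥ 2` and `0 < μ < 1/n`, the atomless measure `F*` on `[0,1]` with
cdf `(x/(nμ))^{1/(n-1)}` on `[0,nμ]` is the unique symmetric equilibrium of the frictionless
game. -/
theorem stmt_12 (n : ℕ) (hn : 2 ≤ n) (μ : ℝ) (hμ : 0 < μ) (hμn : μ < 1 / (n : ℝ))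
    (Fstar : Measure ℝ) [IsProbabilityMeasure Fstar] (hsupp : Fstar (Set.Icc (0:ℝ) 1)ᶜ = 0)
    (hatomless : ∀ x : ℝ, Fstar {x} = 0)
    (hcdf : ∀ x : ℝ, 0 ≤ x → x ≤ (n : ℝ) * μ →
      (Fstar (Set.Iic x)).toReal = (x / ((n : ℝ) * μ)) ^ ((1 : ℝ) / ((n : ℝ) - 1)))
    (hcdf2 : ∀ x : ℝ, (n : ℝ) * μ ≤ x → (Fstar (Set.Iic x)).toReal = 1) :
    (∀ G : Measure ℝ, MemM μ G → winProb n G Fstar ≤ 1 / (n : ℝ)) ∧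
    (∀ F : Measure ℝ, MemM μ F →
      (∀ G : Measure ℝ, MemM μ G → winProb n G F ≤ 1 / (n : ℝ)) → F = Fstar) :=
  stmt_12_general n hn μ hμ hμn Fstar hsupp hcdf hcdf2
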